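/- arXiv:2509.19355 — 5 statements merged into one kernel-verified Lean document; each statement's English description precedes it below -/
import Mathlib

section
/- Let x, r, n be integers with 0 ≤ x ≤ n−r, and let d = (d_1 ≥ … ≥ d_{n−r−x}), c = (c_1 ≥ … ≥ c_{n−r}), a = (a_1 ≥ … ≥ a_x) be partitions of nonnegative integers. Suppose c is generalized-majorized by (d, a), i.e., d_i ≥ c_{i+x} for 1 ≤ i ≤ n−r−x, ∑_{i=1}^{h_x} c_i − ∑_{i=1}^{h_x−x} d_i ≤ ∑_{i=1}^{x} a_i where h_x = min{i : d_{i−x+1} < c_i} (with conventions d_i = +∞ for i ≤ 0 and d_i = −∞ for i > n−r−x), and ∑_{i=1}^{n−r} c_i = ∑_{i=1}^{n−r−x} d_i + ∑_{i=1}^{x} a_i. Then d_i = c_{i+x} for all h_x − x + 1 ≤ i ≤ n−r−x. -/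
open Finset

noncomputable section

/-- `hIdx d g m j` is `h_j = min{i : d_{i-j+1} < g_i}`, where `d` has length `m`,
with the conventions `d_i = +∞` for `i ≤ 0` and `d_i = -∞` for `i > m`. -/
def hIdx (d g : ℕ → ℤ) (m j : ℕ) : ℕ :=
  sInf {i : ℕ | j ≤ i ∧ (m + j ≤ i ∨ d (i - j + 1) < g i)}

/-- Generalized majorization `g ≺' (d, a)`, where `g` has length `m + s`,
`d` has length `m` and `a` has length `s` (all sequences 1-indexed). -/
def GenMaj (g d a : ℕ → ℤ) (m s : ℕ) : Prop :=
  (∀ i, 1 ≤ i → i ≤ m → g (i + s) ≤ d i) ∧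
  (∀ j, 1 ≤ j → j ≤ s →
    ∑ i ∈ Icc 1 (hIdx d g m j), g i - ∑ i ∈ Icc 1 (hIdx d g m j - j), d i ≤
      ∑ i ∈ Icc 1 j, a i) ∧
  (∑ i ∈ Icc 1 (m + s), g i = ∑ i ∈ Icc 1 m, d i + ∑ i ∈ Icc 1 s, a i)

/-- Ordinary majorization `a ≺ b` for integer sequences of length `s`. -/
def Maj (a b : ℕ → ℤ) (s : ℕ) : Prop :=
  (∀ k, 1 ≤ k → k ≤ s - 1 → ∑ i ∈ Icc 1 k, a i ≤ ∑ i ∈ Icc 1 k, b i) ∧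
  ∑ i ∈ Icc 1 s, a i = ∑ i ∈ Icc 1 s, b i

/-!
The inequality of `GenMaj` at `j = s` bounds the head `∑_{i ≤ h_s} g_i - ∑_{i ≤ h_s - s} d_i`
by `∑ a`, so the total-sum equation forces the tail `∑_{i > h_s - s} d_i` to be at most
`∑_{i > h_s - s} g_{i+s}`. Termwise `g_{i+s} ≤ d_i`, hence every term of the tail is an equality.
-/

lemma sum_Icc_one_add_sum_Icc_succ {M : Type*} [AddCommMonoid M] (f : ℕ → M) {k m : ℕ}
    (hkm : k ≤ m) : ∑ i ∈ Icc 1 k, f i + ∑ i ∈ Icc (k + 1) m, f i = ∑ i ∈ Icc 1 m, f i := by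
  rw [Icc_add_one_left_eq_Ioc]
  exact sum_Ioc_consecutive f (Nat.zero_le k) hkm

lemma sum_Icc_comp_add_right {M : Type*} [AddCommMonoid M] (f : ℕ → M) (a b s : ℕ) :
    ∑ i ∈ Icc a b, f (i + s) = ∑ i ∈ Icc (a + s) (b + s), f i := by
  rw [← map_add_right_Icc, sum_map]
  rfl

section hIdx

variable (d g : ℕ → ℤ) (m j : ℕ)

lemma le_hIdx : j ≤ hIdx d g m j :=
  (Nat.sInf_mem (s := {i : ℕ | j ≤ i ∧ (m + j ≤ i ∨ d (i - j + 1) < g i)})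
    ⟨m + j, Nat.le_add_left _ _, Or.inl le_rfl⟩).1

lemma hIdx_le : hIdx d g m j ≤ m + j :=
  Nat.sInf_le ⟨Nat.le_add_left _ _, Or.inl le_rfl⟩

end hIdx

namespace GenMaj

variable {g d a : ℕ → ℤ} {m s : ℕ}

lemma sum_head_le (hmaj : GenMaj g d a m s) :
    ∑ i ∈ Icc 1 (hIdx d g m s), g i - ∑ i ∈ Icc 1 (hIdx d g m s - s), d i ≤
      ∑ i ∈ Icc 1 s, a i := by
  rcases Nat.eq_zero_or_pos s with rfl | hs
  · have hle : ∑ i ∈ Icc 1 (hIdx d g m 0), g i ≤ ∑ i ∈ Icc 1 (hIdx d g m 0), d i :=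
      sum_le_sum fun i hi => hmaj.1 i (mem_Icc.1 hi).1 ((mem_Icc.1 hi).2.trans (hIdx_le d g m 0))
    simpa using hle
  · exact hmaj.2.1 s hs le_rfl

lemma sum_tail_le (hmaj : GenMaj g d a m s) :
    ∑ i ∈ Icc (hIdx d g m s - s + 1) m, d i ≤ ∑ i ∈ Icc (hIdx d g m s - s + 1) m, g (i + s) := by
  have hsh := le_hIdx d g m s
  have hhm := hIdx_le d g m s
  have hg := sum_Icc_one_add_sum_Icc_succ g hhm
  have hd := sum_Icc_one_add_sum_Icc_succ d (k := hIdx d g m s - s) (m := m) (by omega)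
  rw [sum_Icc_comp_add_right, show hIdx d g m s - s + 1 + s = hIdx d g m s + 1 by omega]
  linarith [hmaj.sum_head_le, hmaj.2.2]

lemma eq_of_hIdx_sub_add_one_le (hmaj : GenMaj g d a m s) :
    ∀ i, hIdx d g m s - s + 1 ≤ i → i ≤ m → d i = g (i + s) := by
  have hle : ∀ i ∈ Icc (hIdx d g m s - s + 1) m, g (i + s) ≤ d i := fun i hi =>
    hmaj.1 i (by have := (mem_Icc.1 hi).1; omega) (mem_Icc.1 hi).2
  have heq := (sum_eq_sum_iff_of_le hle).1 (le_antisymm (sum_le_sum hle) hmaj.sum_tail_le)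
  exact fun i hi1 hi2 => (heq i (mem_Icc.2 ⟨hi1, hi2⟩)).symm

end GenMaj

theorem stmt0_general (n r x : ℕ)
    (d c a : ℕ → ℤ)
    (hmaj : GenMaj c d a (n - r - x) x) :
    ∀ i, hIdx d c (n - r - x) x - x + 1 ≤ i → i ≤ n - r - x → d i = c (i + x) :=
  hmaj.eq_of_hIdx_sub_add_one_le

/-- Lemma 1.3(1): if the partitions satisfy c ≺' (d, a) then
d_i = c_{i+x} for h_x - x + 1 ≤ i ≤ n - r - x. -/
theorem stmt0 (n r x : ℕ) (hrn : r ≤ n) (hx : x ≤ n - r)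
    (d c a : ℕ → ℤ)
    (hddec : ∀ i, 1 ≤ i → i < n - r - x → d (i + 1) ≤ d i)
    (hd0 : ∀ i, 1 ≤ i → i ≤ n - r - x → 0 ≤ d i)
    (hcdec : ∀ i, 1 ≤ i → i < n - r → c (i + 1) ≤ c i)
    (hc0 : ∀ i, 1 ≤ i → i ≤ n - r → 0 ≤ c i)
    (hadec : ∀ i, 1 ≤ i → i < x → a (i + 1) ≤ a i)
    (ha0 : ∀ i, 1 ≤ i → i ≤ x → 0 ≤ a i)
    (hmaj : GenMaj c d a (n - r - x) x) :
    ∀ i, hIdx d c (n - r - x) x - x + 1 ≤ i → i ≤ n - r - x → d i = c (i + x) :=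
  stmt0_general n r x d c a hmaj
end
end

section
/- Let g, d, a, â be integer sequences with g of length m+s, d of length m, and a, â of length s. If g ≺' (d, a) (generalized majorization) and a ≺ â (ordinary majorization: partial sums of a are at most those of â, with equal total sums), then g ≺' (d, â). -/
open Finset

noncomputable section

theorem Maj.sum_Icc_le {a b : ℕ → ℤ} {s : ℕ} (h : Maj a b s) {k : ℕ} (hk : k ≤ s) :
    ∑ i ∈ Icc 1 k, a i ≤ ∑ i ∈ Icc 1 k, b i := by
  obtain rfl | hk0 := Nat.eq_zero_or_pos k
  · simp
  obtain rfl | hks := hk.eq_or_lt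
  · exact h.2.le
  · exact h.1 k hk0 (Nat.le_sub_one_of_lt hks)

theorem GenMaj.of_maj {g d a b : ℕ → ℤ} {m s : ℕ} (hg : GenMaj g d a m s) (hab : Maj a b s) :
    GenMaj g d b m s :=
  ⟨hg.1, fun j hj hjs => (hg.2.1 j hj hjs).trans (hab.sum_Icc_le hjs),
    hg.2.2.trans (by rw [hab.2])⟩

/-- If g ≺' (d, a) and a ≺ â, then g ≺' (d, â). -/
theorem stmt3 (m s : ℕ) (g d a ahat : ℕ → ℤ)
    (h1 : GenMaj g d a m s) (h2 : Maj a ahat s) :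
    GenMaj g d ahat m s :=
  h1.of_maj h2
end
end

section
/- Let p_1 ≤ … ≤ p_r and q_1 ≤ … ≤ q_{r+x} be nondecreasing sequences of nonnegative integers with 0 ≤ x. Then for each 1 ≤ j ≤ x−1: q_{x−j+1} + ∑_{i=1}^{r} max{p_i, q_{i+x−j+1}} − ∑_{i=1}^{r} max{p_i, q_{i+x−j}} ≥ q_{x−j} + ∑_{i=1}^{r} max{p_i, q_{i+x−j}} − ∑_{i=1}^{r} max{p_i, q_{i+x−j−1}}. -/
/-!
With `S t = ∑_{i=1}^r max (p i) (q (i + t))`, read `q t` as the entry of an extra row `p 0 = -∞`,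
so that `q t + S t = ∑_{i=0}^r max (p i) (q (i + t))`. For `k = x - j` the claim is
`q k + 2 S k ≤ q (k + 1) + S (k + 1) + S (k - 1)`; pairing row `i` of the left-hand side with row
`i + 1` turns it into a sum of Monge inequalities `max a c + max b d ≤ max a d + max b c`
(`a ≤ b`, `c ≤ d`), which hold because `p` and `q` are nondecreasing, plus the inequality
`q (r + k) ≤ q (r + k + 1)` for the unpaired last row.
-/

open Finset

theorem max_add_max_le_max_add_max {α : Type*} [LinearOrder α] [AddCommMonoid α]
    [IsOrderedAddMonoid α] {a b c d : α} (hab : a ≤ b) (hcd : c ≤ d) :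
    max a c + max b d ≤ max a d + max b c := by
  rcases le_total b d with hbd | hdb
  · rw [max_eq_right hbd, add_comm]
    exact add_le_add (le_max_right a d) (max_le_max_right c hab)
  · rw [max_eq_left hdb]
    exact add_le_add (max_le_max_left a hcd) (le_max_left b c)

theorem add_max_le_add_max {α : Type*} [LinearOrder α] [AddCommMonoid α]
    [IsOrderedAddMonoid α] {b c d : α} (hcd : c ≤ d) : c + max b d ≤ d + max b c := by
  have h := max_add_max_le_max_add_max (min_le_left b c) hcd
  rwa [max_eq_right (min_le_right b c), max_eq_right ((min_le_right b c).trans hcd)] at h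

theorem sum_diagonal_add_sum_diagonal_le_of_monge {M : Type*} [AddCommMonoid M] [PartialOrder M]
    [IsOrderedAddMonoid M] (F : ℕ → ℕ → M) (n k : ℕ)
    (hmonge : ∀ i < n,
      F i (i + k) + F (i + 1) (i + 1 + k) ≤ F i (i + k + 1) + F (i + 1) (i + k))
    (hlast : F n (n + k) ≤ F n (n + k + 1)) :
    ∑ i ∈ range (n + 1), F i (i + k) + ∑ i ∈ range n, F (i + 1) (i + 1 + k) ≤
      ∑ i ∈ range (n + 1), F i (i + k + 1) + ∑ i ∈ range n, F (i + 1) (i + k) :=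
  calc ∑ i ∈ range (n + 1), F i (i + k) + ∑ i ∈ range n, F (i + 1) (i + 1 + k)
      = ∑ i ∈ range n, (F i (i + k) + F (i + 1) (i + 1 + k)) + F n (n + k) := by
        rw [sum_range_succ, sum_add_distrib]; abel
    _ ≤ ∑ i ∈ range n, (F i (i + k + 1) + F (i + 1) (i + k)) + F n (n + k + 1) :=
        add_le_add (sum_le_sum fun i hi => hmonge i (mem_range.mp hi)) hlast
    _ = ∑ i ∈ range (n + 1), F i (i + k + 1) + ∑ i ∈ range n, F (i + 1) (i + k) := by
        rw [sum_range_succ, sum_add_distrib]; abel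

theorem sum_Icc_one_eq_sum_range {M : Type*} [AddCommMonoid M] (r : ℕ) (g : ℕ → M) :
    ∑ i ∈ Icc 1 r, g i = ∑ i ∈ range r, g (i + 1) := by
  rw [← Ico_add_one_right_eq_Icc, sum_Ico_eq_sum_range]
  simp [add_comm]

theorem stmt5_general (r x : ℕ) (p q : ℕ → ℤ)
    (hpmono : ∀ i, 1 ≤ i → i < r → p i ≤ p (i + 1))
    (hqmono : ∀ i, 1 ≤ i → i < r + x → q i ≤ q (i + 1)) :
    ∀ j, 1 ≤ j → j ≤ x - 1 →
      q (x - j) + ∑ i ∈ Icc 1 r, max (p i) (q (i + (x - j))) -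
          ∑ i ∈ Icc 1 r, max (p i) (q (i + (x - j) - 1)) ≤
        q (x - j + 1) + ∑ i ∈ Icc 1 r, max (p i) (q (i + (x - j) + 1)) -
          ∑ i ∈ Icc 1 r, max (p i) (q (i + (x - j))) := by
  intro j hj1 hjx
  set k := x - j
  have hk1 : 1 ≤ k := by omega
  have hkx : k < x := by omega
  set F : ℕ → ℕ → ℤ := fun i t => if i = 0 then q t else max (p i) (q t)
  have hrows : ∀ t, ∑ i ∈ range (r + 1), F i (i + t) =
      q t + ∑ i ∈ Icc 1 r, max (p i) (q (i + t)) := by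
    intro t
    rw [sum_range_succ', sum_Icc_one_eq_sum_range]
    simp [F, add_comm]
  have hnext := hrows (k + 1)
  simp only [← add_assoc] at hnext
  have hsame : ∑ i ∈ range r, F (i + 1) (i + 1 + k) = ∑ i ∈ Icc 1 r, max (p i) (q (i + k)) := by
    simp [F, sum_Icc_one_eq_sum_range]
  have hprev : ∑ i ∈ range r, F (i + 1) (i + k) = ∑ i ∈ Icc 1 r, max (p i) (q (i + k - 1)) := by
    rw [sum_Icc_one_eq_sum_range]
    exact sum_congr rfl fun i _ => by simp [F, show i + 1 + k - 1 = i + k by omega]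
  have key := sum_diagonal_add_sum_diagonal_le_of_monge F r k ?_ ?_
  · rw [hrows, hnext, hsame, hprev] at key
    linarith
  · rintro (_ | i) hi
    · simpa [F, add_comm] using add_max_le_add_max (b := p 1) (hqmono k hk1 (by omega))
    · simpa [F, add_assoc, add_comm, add_left_comm] using
        max_add_max_le_max_add_max (hpmono (i + 1) (by omega) hi)
          (hqmono (i + 1 + k) (by omega) (by omega))
  · have hq := hqmono (r + k) (by omega) (by omega)
    by_cases hr : r = 0
    · simpa [F, hr] using hq
    · simpa [F, hr] using max_le_max_left (p r) hq

/-- Concavity-type inequality for the sequence of max-sums (first family, Lemma 2.1). -/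
theorem stmt5 (r x : ℕ) (p q : ℕ → ℤ)
    (hp0 : ∀ i, 1 ≤ i → i ≤ r → 0 ≤ p i)
    (hpmono : ∀ i, 1 ≤ i → i < r → p i ≤ p (i + 1))
    (hq0 : ∀ i, 1 ≤ i → i ≤ r + x → 0 ≤ q i)
    (hqmono : ∀ i, 1 ≤ i → i < r + x → q i ≤ q (i + 1)) :
    ∀ j, 1 ≤ j → j ≤ x - 1 →
      q (x - j) + ∑ i ∈ Icc 1 r, max (p i) (q (i + (x - j))) -
          ∑ i ∈ Icc 1 r, max (p i) (q (i + (x - j) - 1)) ≤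
        q (x - j + 1) + ∑ i ∈ Icc 1 r, max (p i) (q (i + (x - j) + 1)) -
          ∑ i ∈ Icc 1 r, max (p i) (q (i + (x - j))) :=
  stmt5_general r x p q hpmono hqmono
end

section
/- Let φ_1(s) | φ_2(s) | … | φ_r(s) and γ_1(s) | … | γ_{r+x}(s) be two divisibility chains of monic polynomials over a field F, with 0 ≤ x. Then for each 1 ≤ j ≤ x−1: deg(γ_{x−j+1}) + ∑_{i=1}^{r} deg(lcm(φ_i, γ_{i+x−j+1})) − ∑_{i=1}^{r} deg(lcm(φ_i, γ_{i+x−j})) ≥ deg(γ_{x−j}) + ∑_{i=1}^{r} deg(lcm(φ_i, γ_{i+x−j})) − ∑_{i=1}^{r} deg(lcm(φ_i, γ_{i+x−j−1})). -/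
/-!
Put `Δ_p(a, b) = deg lcm(p, b) - deg lcm(p, a)` for `a ∣ b`. Since
`deg lcm = deg p + deg q - deg gcd` and `gcd(q, a) gcd(p, b) ∣ gcd(q, b) gcd(p, a)` whenever
`p ∣ q` and `a ∣ b`, these increments can only shrink as `p` moves up a divisibility chain.
Extending `φ` by `φ_0 = 1` makes `Δ_{φ_0}(γ_k, γ_{k+1}) = deg γ_{k+1} - deg γ_k`, and with
`k = x - j` the inequality reads `∑_{i<r} Δ_{φ_{i+1}}(γ_{i+k}, γ_{i+k+1}) ≤
∑_{i≤r} Δ_{φ_i}(γ_{i+k}, γ_{i+k+1})`: compare termwise and use `Δ_{φ_r} ≥ 0`.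
-/

open Finset Polynomial

noncomputable section

theorem gcd_mul_gcd_dvd_gcd_mul_gcd {α : Type*} [CommMonoidWithZero α] [GCDMonoid α]
    {p q a b : α} (hpq : p ∣ q) (hab : a ∣ b) : gcd q a * gcd p b ∣ gcd q b * gcd p a := by
  have hp : gcd q a * gcd p b ∣ gcd q b * p :=
    mul_dvd_mul (gcd_dvd_gcd dvd_rfl hab) (gcd_dvd_left p b)
  have ha : gcd q a * gcd p b ∣ gcd q b * a := by
    rw [mul_comm (gcd q b)]
    exact mul_dvd_mul (gcd_dvd_right q a) (gcd_dvd_gcd hpq dvd_rfl)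
  exact (gcd_mul_left' (gcd q b) p a).dvd_iff_dvd_right.mp (dvd_gcd hp ha)

namespace Polynomial

variable {F : Type*} [Field F] [DecidableEq F] {p q a b : F[X]}

theorem natDegree_gcd_add_natDegree_lcm (hp : p ≠ 0) (hq : q ≠ 0) :
    (gcd p q).natDegree + (lcm p q).natDegree = p.natDegree + q.natDegree := by
  rw [← natDegree_mul (gcd_ne_zero_of_left hp) (lcm_ne_zero_iff.mpr ⟨hp, hq⟩),
    ← natDegree_mul hp hq]
  exact natDegree_eq_of_degree_eq (degree_eq_degree_of_associated (gcd_mul_lcm p q))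

theorem natDegree_gcd_add_natDegree_gcd_le (hq : q ≠ 0) (hpq : p ∣ q) (hab : a ∣ b) :
    (gcd q a).natDegree + (gcd p b).natDegree ≤ (gcd q b).natDegree + (gcd p a).natDegree := by
  have hp : p ≠ 0 := ne_zero_of_dvd_ne_zero hq hpq
  have := natDegree_le_of_dvd (gcd_mul_gcd_dvd_gcd_mul_gcd hpq hab)
    (mul_ne_zero (gcd_ne_zero_of_left hq) (gcd_ne_zero_of_left hp))
  rwa [natDegree_mul (gcd_ne_zero_of_left hq) (gcd_ne_zero_of_left hp),
    natDegree_mul (gcd_ne_zero_of_left hq) (gcd_ne_zero_of_left hp)] at this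

theorem natDegree_lcm_sub_natDegree_lcm_le (hq : q ≠ 0) (hb : b ≠ 0) (hpq : p ∣ q)
    (hab : a ∣ b) :
    ((lcm q b).natDegree : ℤ) - (lcm q a).natDegree ≤
      ((lcm p b).natDegree : ℤ) - (lcm p a).natDegree := by
  have hp : p ≠ 0 := ne_zero_of_dvd_ne_zero hq hpq
  have ha : a ≠ 0 := ne_zero_of_dvd_ne_zero hb hab
  have := natDegree_gcd_add_natDegree_gcd_le hq hpq hab
  have := natDegree_gcd_add_natDegree_lcm hq hb
  have := natDegree_gcd_add_natDegree_lcm hq ha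
  have := natDegree_gcd_add_natDegree_lcm hp hb
  have := natDegree_gcd_add_natDegree_lcm hp ha
  omega

theorem natDegree_lcm_le_natDegree_lcm (hp : p ≠ 0) (hb : b ≠ 0) (hab : a ∣ b) :
    (lcm p a).natDegree ≤ (lcm p b).natDegree :=
  natDegree_le_of_dvd (lcm_dvd_lcm dvd_rfl hab) (lcm_ne_zero_iff.mpr ⟨hp, hb⟩)

theorem sum_range_natDegree_lcm_sub_le {ψ g : ℕ → F[X]} {r : ℕ}
    (hψ : ∀ i < r, ψ i ∣ ψ (i + 1)) (hg : ∀ i ≤ r, g i ∣ g (i + 1))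
    (hψ0 : ∀ i ≤ r, ψ i ≠ 0) (hg0 : ∀ i ≤ r, g (i + 1) ≠ 0) :
    ∑ i ∈ range r,
        (((lcm (ψ (i + 1)) (g (i + 1))).natDegree : ℤ) - (lcm (ψ (i + 1)) (g i)).natDegree) ≤
      ∑ i ∈ range (r + 1),
        (((lcm (ψ i) (g (i + 1))).natDegree : ℤ) - (lcm (ψ i) (g i)).natDegree) := by
  rw [sum_range_succ]
  refine le_add_of_le_of_nonneg (sum_le_sum fun i hi ↦ ?_) ?_
  · have hi : i < r := mem_range.mp hi
    exact natDegree_lcm_sub_natDegree_lcm_le (hψ0 (i + 1) hi) (hg0 i hi.le) (hψ i hi) (hg i hi.le)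
  · exact sub_nonneg.mpr <| Int.ofNat_le.mpr <|
      natDegree_lcm_le_natDegree_lcm (hψ0 r le_rfl) (hg0 r le_rfl) (hg r le_rfl)

end Polynomial

/-- Lemma 2.1 (first family): concavity-type inequality for degrees of lcm's along two
divisibility chains of monic polynomials. -/
theorem stmt7 {F : Type*} [Field F] [DecidableEq F] (r x : ℕ) (φ γ : ℕ → Polynomial F)
    (hφm : ∀ i, 1 ≤ i → i ≤ r → (φ i).Monic)
    (hφd : ∀ i, 1 ≤ i → i < r → φ i ∣ φ (i + 1))
    (hγm : ∀ i, 1 ≤ i → i ≤ r + x → (γ i).Monic)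
    (hγd : ∀ i, 1 ≤ i → i < r + x → γ i ∣ γ (i + 1)) :
    ∀ j, 1 ≤ j → j ≤ x - 1 →
      ((γ (x - j)).natDegree : ℤ) +
          ∑ i ∈ Icc 1 r, ((GCDMonoid.lcm (φ i) (γ (i + (x - j)))).natDegree : ℤ) -
          ∑ i ∈ Icc 1 r, ((GCDMonoid.lcm (φ i) (γ (i + (x - j) - 1))).natDegree : ℤ) ≤
        ((γ (x - j + 1)).natDegree : ℤ) +
          ∑ i ∈ Icc 1 r, ((GCDMonoid.lcm (φ i) (γ (i + (x - j) + 1))).natDegree : ℤ) -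
          ∑ i ∈ Icc 1 r, ((GCDMonoid.lcm (φ i) (γ (i + (x - j)))).natDegree : ℤ) := by
  intro j hj1 hj2
  obtain ⟨hk1, hkx⟩ : 1 ≤ x - j ∧ x - j < x := by omega
  generalize x - j = k at hk1 hkx ⊢
  let ψ := Function.update φ 0 1
  have hψ : ∀ i, ψ (i + 1) = φ (i + 1) := fun i ↦ Function.update_of_ne i.succ_ne_zero _ _
  have key := sum_range_natDegree_lcm_sub_le (ψ := ψ) (g := fun i ↦ γ (i + k)) (r := r)
    (fun i hi ↦ by cases i <;> simp [ψ, hφd, hi])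
    (fun i hi ↦ add_right_comm i 1 k ▸ hγd (i + k) (by omega) (by omega))
    (fun i hi ↦ by cases i <;> simp [ψ, (hφm _ _ hi).ne_zero])
    (fun i hi ↦ (hγm _ (by omega) (by omega)).ne_zero)
  have hIcc : ∀ f : ℕ → ℤ, ∑ i ∈ Icc 1 r, f i = ∑ i ∈ range r, f (i + 1) := fun f ↦ by
    rw [range_eq_Ico, sum_Ico_add', zero_add, Ico_add_one_right_eq_Icc]
  have hpred : ∀ i, i + 1 + k - 1 = i + k := by omega
  have hsucc : ∀ i, i + 1 + k + 1 = i + 1 + 1 + k := by omega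
  rw [sum_range_succ'] at key
  simp only [hψ, ψ, Function.update_self, lcm_one_left, natDegree_eq_of_degree_eq degree_normalize,
    sum_sub_distrib, zero_add] at key
  rw [add_comm 1 k] at key
  simp only [hIcc, hpred, hsucc]
  omega
end
end

section
/- (Interlacing necessity for invariant orders at infinity under row completion.) Let R(s) ∈ F(s)^{m×n} have rank r and invariant orders at infinity p̃_1 ≤ … ≤ p̃_r. Suppose W̃(s) ∈ F(s)^{z×n} is such that [R(s); W̃(s)] has rank r + x (0 ≤ x ≤ min{z, n−r}) and invariant orders at infinity q̃_1 ≤ … ≤ q̃_{r+x}. Then q̃_i ≤ p̃_i ≤ q̃_{i+z} for all 1 ≤ i ≤ r, with the convention q̃_j = +∞ for j > r + x. -/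
open Finset Polynomial

noncomputable section

open scoped Classical

variable {F : Type*} [Field F]

/-- The natural inclusion of polynomials into rational functions. -/
def ratOf {F : Type*} [Field F] (q : Polynomial F) : RatFunc F :=
  algebraMap (Polynomial F) (RatFunc F) q

/-- A polynomial vector, viewed as a vector of rational functions. -/
def polyVec {F : Type*} [Field F] {ι : Type*} (B : ι → Polynomial F) : ι → RatFunc F :=
  fun j => ratOf (B j)

/-- The degree of a polynomial vector: the maximum of the degrees of its entries. -/
def vecDeg {F : Type*} [Field F] {ι : Type*} [Fintype ι] (B : ι → Polynomial F) : ℕ :=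
  Finset.univ.sup fun j => (B j).natDegree

/-- `B` is a polynomial basis of the subspace `V` of `ι → F(s)`. -/
def IsPolyBasisOf {F : Type*} [Field F] {ι : Type*} [Fintype ι]
    (V : Submodule (RatFunc F) (ι → RatFunc F)) {k : ℕ}
    (B : Fin k → ι → Polynomial F) : Prop :=
  LinearIndependent (RatFunc F) (fun i => polyVec (B i)) ∧
  Submodule.span (RatFunc F) (Set.range fun i => polyVec (B i)) = V

/-- `B` is a minimal (least order) polynomial basis of `V`. -/
def IsMinimalBasisOf {F : Type*} [Field F] {ι : Type*} [Fintype ι]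
    (V : Submodule (RatFunc F) (ι → RatFunc F)) {k : ℕ}
    (B : Fin k → ι → Polynomial F) : Prop :=
  IsPolyBasisOf V B ∧
  ∀ (B' : Fin k → ι → Polynomial F), IsPolyBasisOf V B' →
    ∑ i, vecDeg (B i) ≤ ∑ i, vecDeg (B' i)

/-- The multiset `c` is the multiset of minimal indices of the subspace `V`. -/
def HasMinIndices {F : Type*} [Field F] {ι : Type*} [Fintype ι]
    (V : Submodule (RatFunc F) (ι → RatFunc F)) (c : Multiset ℕ) : Prop :=
  ∃ (k : ℕ) (B : Fin k → ι → Polynomial F), IsMinimalBasisOf V B ∧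
    Multiset.map (fun i => vecDeg (B i)) Finset.univ.val = c

/-- The right null-space of a rational matrix. -/
def rightNull {F : Type*} [Field F] {ιr ιc : Type*} [Fintype ιr] [Fintype ιc]
    (R : Matrix ιr ιc (RatFunc F)) : Submodule (RatFunc F) (ιc → RatFunc F) :=
  LinearMap.ker R.mulVecLin

/-- The left null-space of a rational matrix. -/
def leftNull {F : Type*} [Field F] {ιr ιc : Type*} [Fintype ιr] [Fintype ιc]
    (R : Matrix ιr ιc (RatFunc F)) : Submodule (RatFunc F) (ιr → RatFunc F) :=
  LinearMap.ker R.transpose.mulVecLin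

/-- `c` is the multiset of column minimal indices of `R`. -/
def HasColMinIndices {F : Type*} [Field F] {ιr ιc : Type*} [Fintype ιr] [Fintype ιc]
    (R : Matrix ιr ιc (RatFunc F)) (c : Multiset ℕ) : Prop :=
  HasMinIndices (rightNull R) c

/-- `u` is the multiset of row minimal indices of `R`. -/
def HasRowMinIndices {F : Type*} [Field F] {ιr ιc : Type*} [Fintype ιr] [Fintype ιc]
    (R : Matrix ιr ιc (RatFunc F)) (u : Multiset ℕ) : Prop :=
  HasMinIndices (leftNull R) u

/-- A square polynomial matrix is unimodular if its determinant is a unit (a nonzero constant). -/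
def IsUnimodular {F : Type*} [Field F] {k : Type*} [Fintype k] [DecidableEq k]
    (U : Matrix k k (Polynomial F)) : Prop :=
  IsUnit U.det

/-- The Smith–McMillan diagonal form with invariant rational functions ε_i/ψ_i (1-indexed). -/
def smDiag {F : Type*} [Field F] (m n r : ℕ) (ε ψ : ℕ → Polynomial F) :
    Matrix (Fin m) (Fin n) (RatFunc F) :=
  Matrix.of fun i j =>
    if (i : ℕ) = (j : ℕ) ∧ (i : ℕ) < r then ratOf (ε ((i : ℕ) + 1)) / ratOf (ψ ((i : ℕ) + 1)) else 0

/-- `R` has rank `r` (implicitly) and invariant rational functions ε_1/ψ_1, …, ε_r/ψ_r: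
the ε's and ψ's form monic divisibility chains with each ε_i/ψ_i irreducible, and `R` is
unimodularly equivalent to the Smith–McMillan form. -/
def HasInvRatFns {F : Type*} [Field F] {m n : ℕ} (R : Matrix (Fin m) (Fin n) (RatFunc F))
    (r : ℕ) (ε ψ : ℕ → Polynomial F) : Prop :=
  (∀ i, 1 ≤ i → i ≤ r → (ε i).Monic ∧ (ψ i).Monic ∧ IsCoprime (ε i) (ψ i)) ∧
  (∀ i, 1 ≤ i → i < r → ε i ∣ ε (i + 1) ∧ ψ (i + 1) ∣ ψ i) ∧
  ∃ (U : Matrix (Fin m) (Fin m) (Polynomial F)) (V : Matrix (Fin n) (Fin n) (Polynomial F)),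
    IsUnimodular U ∧ IsUnimodular V ∧
    (U.map ratOf) * R * (V.map ratOf) = smDiag m n r ε ψ

/-- `P` has invariant factors η_1 | … | η_r : it is unimodularly equivalent to its
Smith normal form. -/
def HasInvFactors {F : Type*} [Field F] {m n : ℕ} (P : Matrix (Fin m) (Fin n) (Polynomial F))
    (r : ℕ) (η : ℕ → Polynomial F) : Prop :=
  (∀ i, 1 ≤ i → i ≤ r → (η i).Monic) ∧
  (∀ i, 1 ≤ i → i < r → η i ∣ η (i + 1)) ∧
  ∃ (U : Matrix (Fin m) (Fin m) (Polynomial F)) (V : Matrix (Fin n) (Fin n) (Polynomial F)),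
    IsUnimodular U ∧ IsUnimodular V ∧
    U * P * V = Matrix.of fun (i : Fin m) (j : Fin n) =>
      if (i : ℕ) = (j : ℕ) ∧ (i : ℕ) < r then η ((i : ℕ) + 1) else 0

/-- A rational function is proper if the degree of its numerator is at most that of
its denominator. -/
def IsProper {F : Type*} [Field F] (f : RatFunc F) : Prop :=
  f.num.degree ≤ f.denom.degree

/-- A square rational matrix is biproper if it is proper and has a proper inverse. -/
def IsBiproper {F : Type*} [Field F] {k : Type*} [Fintype k] [DecidableEq k]
    (B : Matrix k k (RatFunc F)) : Prop :=
  (∀ i j, IsProper (B i j)) ∧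
  ∃ C : Matrix k k (RatFunc F), (∀ i j, IsProper (C i j)) ∧ B * C = 1 ∧ C * B = 1

/-- The Smith–McMillan form at infinity `diag(s^{-q_1}, …, s^{-q_r})` padded with zeros. -/
def smInfDiag {F : Type*} [Field F] (m n r : ℕ) (q : ℕ → ℤ) :
    Matrix (Fin m) (Fin n) (RatFunc F) :=
  Matrix.of fun i j =>
    if (i : ℕ) = (j : ℕ) ∧ (i : ℕ) < r then (RatFunc.X : RatFunc F) ^ (-(q ((i : ℕ) + 1))) else 0

/-- `R` has invariant orders at infinity q_1 ≤ … ≤ q_r : it is biproperly equivalent to the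
Smith–McMillan form at infinity. -/
def HasInfOrders {F : Type*} [Field F] {m n : ℕ} (R : Matrix (Fin m) (Fin n) (RatFunc F))
    (r : ℕ) (q : ℕ → ℤ) : Prop :=
  (∀ i, 1 ≤ i → i < r → q i ≤ q (i + 1)) ∧
  ∃ (B₁ : Matrix (Fin m) (Fin m) (RatFunc F)) (B₂ : Matrix (Fin n) (Fin n) (RatFunc F)),
    IsBiproper B₁ ∧ IsBiproper B₂ ∧ B₁ * R * B₂ = smInfDiag m n r q

/-- Stacking a `z × n` block below an `m × n` matrix. -/
def stack {α : Type*} {m z n : ℕ} (R : Matrix (Fin m) (Fin n) α)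
    (W : Matrix (Fin z) (Fin n) α) : Matrix (Fin (m + z)) (Fin n) α :=
  Matrix.of fun i j =>
    if h : (i : ℕ) < m then R ⟨i, h⟩ j
    else W ⟨(i : ℕ) - m, by have := i.isLt; omega⟩ j

/-- The matrix `p(s)·R(s)` obtained by multiplying every entry of `R` by the polynomial `p`. -/
def polySmul {F : Type*} [Field F] {ιr ιc : Type*} (p : Polynomial F)
    (R : Matrix ιr ιc (RatFunc F)) : Matrix ιr ιc (RatFunc F) :=
  Matrix.of fun i j => ratOf p * R i j

/-!
Say that proper matrices `V`, `U` with `k` rows, resp. columns, compress `A` at level `c` if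
`V (s^c A) U` is biproper. A diagonal `diag(s^{-q̃_j})` is compressed at level `c` to size `k`
whenever `q̃_k ≤ c`, compressions pull back along proper factors (so along biproper
equivalences), and a compression of `R` is one of `[R; W]`. Conversely, write
`s^c [D; W'] = P + B` with `B` strictly proper and `P` keeping only the `W'`-rows and the rows
of `D = diag(s^{-q̃_j})` with `q̃_j ≤ c`. Modulo the maximal ideal of the local ring of proper
functions, `det (V s^c [D; W'] U)` agrees with `det (V P U)`, which vanishes unless `k ≤ rank P`;
so a compression of size `k` forces `k ≤ #{j | q̃_j ≤ c} + z`. Comparing these counts at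
`c = p̃_i` and at `c = q̃_{i+z}` gives the two inequalities.
-/

open Matrix

abbrev properRatFuncs (F : Type*) [Field F] : ValuationSubring (RatFunc F) :=
  (RatFunc.inftyValuation F).valuationSubring

local notation "𝒪" => properRatFuncs F

theorem isProper_iff_inftyValuation_le_one {f : RatFunc F} :
    IsProper f ↔ RatFunc.inftyValuation F f ≤ 1 := by
  rcases eq_or_ne f 0 with rfl | hf
  · simp [IsProper]
  rw [RatFunc.inftyValuation_apply, RatFunc.inftyValuation_of_nonzero _ hf, ← WithZero.exp_zero,
    WithZero.exp_le_exp, IsProper, RatFunc.intDegree, sub_nonpos, Nat.cast_le,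
    degree_eq_natDegree (RatFunc.num_ne_zero hf), degree_eq_natDegree f.denom_ne_zero, Nat.cast_le]

theorem exists_map_eq_of_isProper {m n : Type*} {M : Matrix m n (RatFunc F)}
    (hM : ∀ i j, IsProper (M i j)) : ∃ M' : Matrix m n 𝒪, M'.map (𝒪).subtype = M :=
  ⟨.of fun i j => ⟨M i j, isProper_iff_inftyValuation_le_one.1 (hM i j)⟩, rfl⟩

section

variable {m n ι : Type*} [Fintype m] [Fintype n] [Fintype ι]

/-- Certifies that at least `k` invariant orders at infinity of `A` are `≤ c`. -/
def HasBiproperCompression (c : ℤ) (k : ℕ) (A : Matrix m n (RatFunc F)) : Prop :=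
  ∃ (V : Matrix (Fin k) m 𝒪) (U : Matrix n (Fin k) 𝒪) (T : Matrix (Fin k) (Fin k) 𝒪),
    IsUnit T.det ∧
      V.map (𝒪).subtype * ((RatFunc.X ^ c : RatFunc F) • A) * U.map (𝒪).subtype = T.map (𝒪).subtype

namespace HasBiproperCompression

variable {c : ℤ} {k : ℕ}

theorem of_mul {m' n' : Type*} [Fintype m'] [Fintype n'] {A : Matrix m n (RatFunc F)}
    {L : Matrix m' m 𝒪} {N : Matrix n n' 𝒪}
    (h : HasBiproperCompression c k (L.map (𝒪).subtype * A * N.map (𝒪).subtype)) :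
    HasBiproperCompression c k A := by
  obtain ⟨V, U, T, hT, hVU⟩ := h
  refine ⟨V * L, N * U, T, hT, ?_⟩
  rw [Matrix.map_mul, Matrix.map_mul, ← hVU]
  simp only [Matrix.mul_assoc, Matrix.mul_smul, Matrix.smul_mul]

theorem of_submatrix {m' n' : Type*} [Fintype m'] [Fintype n'] {A : Matrix m n (RatFunc F)}
    {e : m' → m} {f : n' → n} (h : HasBiproperCompression c k (A.submatrix e f)) :
    HasBiproperCompression c k A := by
  refine of_mul (L := (1 : Matrix m m 𝒪).submatrix e id) (N := (1 : Matrix n n 𝒪).submatrix id f) ?_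
  convert h using 2
  ext i j
  simp [Matrix.mul_apply, Matrix.one_apply, apply_ite ((↑) : 𝒪 → RatFunc F), ite_mul, mul_ite]

theorem fromRows {A : Matrix m n (RatFunc F)} (h : HasBiproperCompression c k A)
    (B : Matrix ι n (RatFunc F)) : HasBiproperCompression c k (Matrix.fromRows A B) :=
  of_submatrix (e := Sum.inl) (f := id) h

theorem le_rank {A P B : Matrix m n (RatFunc F)} (h : HasBiproperCompression c k A)
    (hsplit : (RatFunc.X ^ c : RatFunc F) • A = P + B)
    (hB : ∀ i j, RatFunc.inftyValuation F (B i j) < 1) : k ≤ P.rank := by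
  obtain ⟨V, U, T, hT, hVU⟩ := h
  by_contra! hk
  let B' : Matrix m n 𝒪 := .of fun i j => ⟨B i j, (hB i j).le⟩
  have hB'res : B'.map (IsLocalRing.residue 𝒪) = 0 := by
    ext i j
    exact (IsLocalRing.residue_eq_zero_iff _).2 ((Valuation.mem_maximalIdeal_iff _ _).2 (hB i j))
  have hPdet : (V.map (𝒪).subtype * P * U.map (𝒪).subtype).det = 0 := by
    by_contra hne
    have := (rank_of_det_ne_zero hne).symm.trans_le
      ((rank_mul_le_left _ _).trans (rank_mul_le_right _ _))
    simp only [Fintype.card_fin] at this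
    omega
  have hlift : (T - V * B' * U).map (𝒪).subtype = V.map (𝒪).subtype * P * U.map (𝒪).subtype := by
    rw [Matrix.map_sub _ (map_sub _), Matrix.map_mul, Matrix.map_mul, ← hVU, hsplit,
      show B'.map (𝒪).subtype = B from rfl, Matrix.mul_add, Matrix.add_mul, add_sub_cancel_right]
  have hdet : (T - V * B' * U).det = 0 := by
    apply Subtype.val_injective
    rw [← ValuationSubring.coe_subtype, RingHom.map_det, RingHom.mapMatrix_apply, hlift, hPdet,
      map_zero]
  have hres : T.map (IsLocalRing.residue 𝒪) = (T - V * B' * U).map (IsLocalRing.residue 𝒪) := by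
    rw [Matrix.map_sub _ (map_sub _), Matrix.map_mul, Matrix.map_mul, hB'res, Matrix.mul_zero,
      Matrix.zero_mul, sub_zero]
  apply (hT.map (IsLocalRing.residue 𝒪)).ne_zero
  rw [RingHom.map_det, RingHom.mapMatrix_apply, hres, ← RingHom.mapMatrix_apply, ← RingHom.map_det,
    hdet, map_zero]

end HasBiproperCompression

end

theorem hasBiproperCompression_diagonal {c : ℤ} {k : ℕ} {d : Fin k → ℤ} (hd : ∀ a, d a ≤ c) :
    HasBiproperCompression c k (diagonal fun a => (RatFunc.X ^ (-d a) : RatFunc F)) := by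
  have hmem : ∀ a, (RatFunc.X ^ (d a - c) : RatFunc F) ∈ 𝒪 := fun a => by
    rw [Valuation.mem_valuationSubring_iff, RatFunc.inftyValuation.X_zpow, ← WithZero.exp_zero,
      WithZero.exp_le_exp]
    linarith [hd a]
  refine ⟨1, diagonal fun a => ⟨_, hmem a⟩, 1, by simp, ?_⟩
  rw [Matrix.map_one _ (map_zero _) (map_one _), diagonal_map (map_zero _), Matrix.one_mul,
    ← diagonal_smul, diagonal_mul_diagonal]
  convert diagonal_one with a
  rw [Pi.smul_apply, smul_eq_mul, ValuationSubring.coe_subtype, ← zpow_add₀ RatFunc.X_ne_zero,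
    ← zpow_add₀ RatFunc.X_ne_zero]
  convert zpow_zero (RatFunc.X : RatFunc F) using 2
  ring

theorem smInfDiag_submatrix_castLE {k m n r : ℕ} (q : ℕ → ℤ) (hkr : k ≤ r) (hkm : k ≤ m)
    (hkn : k ≤ n) :
    (smInfDiag m n r q : Matrix _ _ (RatFunc F)).submatrix (Fin.castLE hkm) (Fin.castLE hkn) =
      diagonal fun a : Fin k => RatFunc.X ^ (-q (a + 1)) := by
  ext a b
  simp only [smInfDiag, submatrix_apply, of_apply, Fin.val_castLE, diagonal_apply, Fin.ext_iff]
  split_ifs <;> first | rfl | omega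

theorem HasInfOrders.monotoneOn {m n r : ℕ} {A : Matrix (Fin m) (Fin n) (RatFunc F)}
    {q : ℕ → ℤ} (h : HasInfOrders A r q) : MonotoneOn q (Set.Icc 1 r) :=
  monotoneOn_of_le_succ Set.ordConnected_Icc fun a _ ha hsa => by
    rw [Order.succ_eq_add_one] at hsa ⊢
    exact h.1 a ha.1 (by have := hsa.2; omega)

theorem HasInfOrders.hasBiproperCompression {m n r k : ℕ}
    {A : Matrix (Fin m) (Fin n) (RatFunc F)} {q : ℕ → ℤ} {c : ℤ} (h : HasInfOrders A r q)
    (hkr : k ≤ r) (hrm : r ≤ m) (hrn : r ≤ n) (hqk : q k ≤ c) : HasBiproperCompression c k A := by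
  have hq := h.monotoneOn
  obtain ⟨-, B₁, B₂, ⟨hB₁, -⟩, ⟨hB₂, -⟩, hD⟩ := h
  obtain ⟨B₁, rfl⟩ := exists_map_eq_of_isProper hB₁
  obtain ⟨B₂, rfl⟩ := exists_map_eq_of_isProper hB₂
  refine HasBiproperCompression.of_mul (L := B₁) (N := B₂) ?_
  rw [hD]
  refine HasBiproperCompression.of_submatrix (e := Fin.castLE (hkr.trans hrm))
    (f := Fin.castLE (hkr.trans hrn)) ?_
  rw [smInfDiag_submatrix_castLE q hkr]
  refine hasBiproperCompression_diagonal fun a => ?_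
  have := a.isLt
  exact (hq ⟨by omega, by omega⟩ ⟨by omega, hkr⟩ (by omega)).trans hqk

theorem HasBiproperCompression.le_card_add_card_of_smInfDiag {m n r k : ℕ} {q : ℕ → ℤ} {c : ℤ}
    {ι : Type*} [Fintype ι] {W : Matrix ι (Fin n) (RatFunc F)}
    (h : HasBiproperCompression c k (Matrix.fromRows (smInfDiag m n r q) W)) :
    k ≤ #{l : Fin m | (l : ℕ) < r ∧ q (l + 1) ≤ c} + Fintype.card ι := by
  set S : Finset (Fin m) := {l | (l : ℕ) < r ∧ q (l + 1) ≤ c}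
  set D : Matrix (Fin m) (Fin n) (RatFunc F) := (RatFunc.X ^ c : RatFunc F) • smInfDiag m n r q
  let P := Matrix.fromRows (of fun i j => if i ∈ S then D i j else 0)
    ((RatFunc.X ^ c : RatFunc F) • W)
  let B := Matrix.fromRows (of fun i j => if i ∈ S then 0 else D i j) (0 : Matrix ι (Fin n) _)
  have hsplit : (RatFunc.X ^ c : RatFunc F) • Matrix.fromRows (smInfDiag m n r q) W = P + B := by
    ext (i | i) j <;> simp only [P, B, D, Matrix.add_apply, fromRows_apply_inl,
      fromRows_apply_inr, of_apply, Matrix.smul_apply]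
    · split_ifs <;> simp
    · simp
  have hB : ∀ i j, RatFunc.inftyValuation F (B i j) < 1 := by
    rintro (i | i) j
    · simp only [B, D, fromRows_apply_inl, of_apply, Matrix.smul_apply, smInfDiag]
      split_ifs with hiS hij
      · simp
      · simp only [S, Finset.mem_filter, Finset.mem_univ, true_and, not_and, not_le] at hiS
        rw [smul_eq_mul, ← zpow_add₀ RatFunc.X_ne_zero, RatFunc.inftyValuation.X_zpow,
          ← WithZero.exp_zero, WithZero.exp_lt_exp]
        linarith [hiS hij.2]
      · simp
    · simp [B]
  have hP : P.rank ≤ #(S.disjSum (univ : Finset ι)) := by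
    refine rank_le_card_of_support_subset _ _ fun i hi => ?_
    rcases i with l | l
    · by_contra hl
      refine hi (funext fun j => ?_)
      simp_all [P]
    · simp
  simpa [Finset.card_disjSum] using (h.le_rank hsplit hB).trans hP

theorem HasBiproperCompression.le_card_add_card {m n r k : ℕ} {q : ℕ → ℤ} {c : ℤ}
    {ι : Type*} [Fintype ι] {R : Matrix (Fin m) (Fin n) (RatFunc F)}
    {W : Matrix ι (Fin n) (RatFunc F)} (hR : HasInfOrders R r q)
    (h : HasBiproperCompression c k (Matrix.fromRows R W)) :
    k ≤ #{l : Fin m | (l : ℕ) < r ∧ q (l + 1) ≤ c} + Fintype.card ι := by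
  obtain ⟨-, B₁, B₂, ⟨-, C₁, hC₁, -, hC₁B₁⟩, ⟨-, C₂, hC₂, hB₂C₂, -⟩, hD⟩ := hR
  obtain ⟨C₁, rfl⟩ := exists_map_eq_of_isProper hC₁
  obtain ⟨C₂, rfl⟩ := exists_map_eq_of_isProper hC₂
  refine le_card_add_card_of_smInfDiag (W := W * B₂)
    (of_mul (L := fromBlocks C₁ 0 0 (1 : Matrix ι ι 𝒪)) (N := C₂) ?_)
  have hR : C₁.map (𝒪).subtype * (B₁ * R * B₂) * C₂.map (𝒪).subtype = R := by
    simp only [← Matrix.mul_assoc, hC₁B₁, Matrix.one_mul]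
    rw [Matrix.mul_assoc, hB₂C₂, Matrix.mul_one]
  have hW : W * B₂ * C₂.map (𝒪).subtype = W := by rw [Matrix.mul_assoc, hB₂C₂, Matrix.mul_one]
  rw [fromBlocks_map, fromBlocks_mul_fromRows, fromRows_mul, ← hD]
  simpa only [Matrix.map_zero _ (map_zero _), Matrix.map_one _ (map_zero _) (map_one _),
    Matrix.zero_mul, add_zero, zero_add, Matrix.one_mul, hR, hW] using h

theorem stack_eq_submatrix_fromRows {α : Type*} {m z n : ℕ} (R : Matrix (Fin m) (Fin n) α)
    (W : Matrix (Fin z) (Fin n) α) :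
    stack R W = (Matrix.fromRows R W).submatrix finSumFinEquiv.symm id := by
  ext i j
  refine Fin.addCases (fun i => ?_) (fun i => ?_) i <;> simp [stack]

theorem hasBiproperCompression_stack_iff {m z n k : ℕ} {c : ℤ}
    {R : Matrix (Fin m) (Fin n) (RatFunc F)} {W : Matrix (Fin z) (Fin n) (RatFunc F)} :
    HasBiproperCompression c k (stack R W) ↔
      HasBiproperCompression c k (Matrix.fromRows R W) := by
  rw [stack_eq_submatrix_fromRows]
  refine ⟨HasBiproperCompression.of_submatrix,
    fun h => .of_submatrix (e := finSumFinEquiv) (f := id) ?_⟩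
  simpa [submatrix_submatrix] using h

theorem card_filter_le_of_lt {m r i : ℕ} {q : ℕ → ℤ} {c : ℤ} (hq : MonotoneOn q (Set.Icc 1 r))
    (hi : 1 ≤ i) (hir : i ≤ r) (hc : c < q i) :
    #{l : Fin m | (l : ℕ) < r ∧ q (l + 1) ≤ c} ≤ i - 1 := by
  calc _ ≤ #(range (i - 1)) := card_le_card_of_injOn (↑) (fun l hl => ?_) Fin.val_injective.injOn
    _ = i - 1 := card_range _
  simp only [coe_filter, Finset.mem_univ, true_and, Set.mem_ofPred_eq] at hl
  by_contra! hli
  simp only [coe_range, Set.mem_Iio, not_lt] at hli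
  have := hq ⟨hi, hir⟩ (show (l : ℕ) + 1 ∈ Set.Icc 1 r from ⟨by omega, by omega⟩) (by omega)
  omega

theorem stmt18_general {F : Type*} [Field F] {m n r z x : ℕ}
    (R : Matrix (Fin m) (Fin n) (RatFunc F)) (hrank : R.rank = r)
    (pt : ℕ → ℤ) (hR : HasInfOrders R r pt)
    (W : Matrix (Fin z) (Fin n) (RatFunc F))
    (hQrank : (stack R W).rank = r + x)
    (qt : ℕ → ℤ) (hQ : HasInfOrders (stack R W) (r + x) qt) :
    ∀ i, 1 ≤ i → i ≤ r →
      qt i ≤ pt i ∧ (i + z ≤ r + x → pt i ≤ qt (i + z)) := by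
  have hrm : r ≤ m := hrank ▸ R.rank_le_height
  have hrn : r ≤ n := hrank ▸ R.rank_le_width
  have hQm : r + x ≤ m + z := hQrank ▸ (stack R W).rank_le_height
  have hQn : r + x ≤ n := hQrank ▸ (stack R W).rank_le_width
  intro i hi hir
  constructor
  · by_contra! hlt
    have hRi := hR.hasBiproperCompression hir hrm hrn le_rfl
    have hQi := (hasBiproperCompression_stack_iff.2 (hRi.fromRows W)).fromRows
      (0 : Matrix (Fin 0) (Fin n) (RatFunc F))
    have hcount := hQi.le_card_add_card hQ
    have hsmall := card_filter_le_of_lt (m := m + z) hQ.monotoneOn hi (by omega) hlt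
    simp only [Fintype.card_fin] at hcount
    omega
  · intro hiz
    by_contra! hlt
    have hQi := hQ.hasBiproperCompression hiz hQm hQn le_rfl
    have hcount := (hasBiproperCompression_stack_iff.1 hQi).le_card_add_card hR
    have hsmall := card_filter_le_of_lt (m := m) hR.monotoneOn hi hir hlt
    simp only [Fintype.card_fin] at hcount
    omega

/-- Interlacing necessity for the invariant orders at infinity under row completion:
q̃_i ≤ p̃_i ≤ q̃_{i+z} for 1 ≤ i ≤ r, with q̃_j = +∞ for j > r + x. -/
theorem stmt18 {F : Type*} [Field F] {m n r z x : ℕ} (hxz : x ≤ z) (hxnr : x ≤ n - r)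
    (R : Matrix (Fin m) (Fin n) (RatFunc F)) (hrank : R.rank = r)
    (pt : ℕ → ℤ) (hR : HasInfOrders R r pt)
    (W : Matrix (Fin z) (Fin n) (RatFunc F))
    (hQrank : (stack R W).rank = r + x)
    (qt : ℕ → ℤ) (hQ : HasInfOrders (stack R W) (r + x) qt) :
    ∀ i, 1 ≤ i → i ≤ r →
      qt i ≤ pt i ∧ (i + z ≤ r + x → pt i ≤ qt (i + z)) :=
  stmt18_general R hrank pt hR W hQrank qt hQ
end
end
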